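/- Let G be a finite simple undirected graph, s and t distinct non-adjacent vertices of G, and S, T minimal s,t-separators of G. Then C_s(G−S) ⊆ C_s(G−T) if and only if C_t(G−T) ⊆ C_t(G−S). -/

import Mathlib

variable {V : Type*}

/-- The graph obtained from `G` by deleting the vertices in `S` (deleted vertices
become isolated; components of vertices outside `S` are the components of `G − S`). -/
def gdel (G : SimpleGraph V) (S : Set V) : SimpleGraph V where
  Adj a b := G.Adj a b ∧ a ∉ S ∧ b ∉ S
  symm := by
    constructor
    intro a b h
    exact ⟨h.1.symm, h.2.2, h.2.1⟩
  loopless := by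
    constructor
    intro a h
    exact G.ne_of_adj h.1 rfl

/-- `compS G S v` is the vertex set of the connected component of `v` in `G − S`. -/
def compS (G : SimpleGraph V) (S : Set V) (v : V) : Set V :=
  {w | (gdel G S).Reachable v w}

/-- `S` is an `s,t`-separator of `G`: `S ⊆ V(G) \ {s,t}` and `s` and `t` lie in
different connected components of `G − S`. -/
def IsSep (G : SimpleGraph V) (s t : V) (S : Set V) : Prop :=
  s ∉ S ∧ t ∉ S ∧ ¬ (gdel G S).Reachable s t

/-- A minimal `s,t`-separator: no proper subset is an `s,t`-separator. -/
def IsMinSep (G : SimpleGraph V) (s t : V) (S : Set V) : Prop :=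
  IsSep G s t S ∧ ∀ S' : Set V, S' ⊂ S → ¬ IsSep G s t S'

/-- The (open) neighborhood of a vertex set `C` in `G`. -/
def nbdSet (G : SimpleGraph V) (C : Set V) : Set V :=
  {v | v ∉ C ∧ ∃ w ∈ C, G.Adj v w}

lemma walk_ind {H : SimpleGraph V} {s : V} (P : V → Prop) (hs : P s)
    (hext : ∀ y x, P y → H.Adj y x → P x) :
    ∀ {x : V}, H.Reachable s x → P x := by
  have key : ∀ {x y : V}, H.Walk x y → P y → P x := by
    intro x y p
    induction p with
    | nil => exact id
    | cons h q ih => exact fun hy => hext _ _ (ih hy) h.symm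
  intro x hr
  obtain ⟨p⟩ := hr.symm
  exact key p hs

lemma mem_comp_not_sep {G : SimpleGraph V} {S : Set V} {v w : V}
    (hv : v ∉ S) (hw : w ∈ compS G S v) : w ∉ S := by
  obtain ⟨p⟩ := hw.symm
  cases p with
  | nil => exact hv
  | cons h q => exact h.2.1

lemma isSep_symm {G : SimpleGraph V} {s t : V} {S : Set V}
    (h : IsSep G s t S) : IsSep G t s S :=
  ⟨h.2.1, h.1, fun r => h.2.2 r.symm⟩

lemma isMinSep_symm {G : SimpleGraph V} {s t : V} {S : Set V}
    (h : IsMinSep G s t S) : IsMinSep G t s S :=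
  ⟨isSep_symm h.1, fun S' hS' hsep => h.2 S' hS' (isSep_symm hsep)⟩

lemma min_nbr {G : SimpleGraph V} {s t : V} {S : Set V}
    (hS : IsMinSep G s t S) {v : V} (hv : v ∈ S) :
    ∃ u, u ∈ compS G S s ∧ G.Adj u v := by
  by_contra hno
  push_neg at hno
  refine hS.2 (S \ {v}) ⟨Set.diff_subset, fun hsub => ?_⟩ ?_
  · exact (hsub hv).2 rfl
  refine ⟨fun h => hS.1.1 h.1, fun h => hS.1.2.1 h.1, fun hr => ?_⟩
  have key : t ∈ compS G S s := by
    refine walk_ind (fun x => x ∈ compS G S s) (SimpleGraph.Reachable.refl s)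
      (fun y x ih h => ?_) hr
    have hy : y ∉ S := mem_comp_not_sep hS.1.1 ih
    by_cases hx : x = v
    · exact absurd (hx ▸ h.1) (hno y ih)
    · have hxS : x ∉ S := fun hxS => h.2.2 ⟨hxS, hx⟩
      exact ih.trans (SimpleGraph.Adj.reachable ⟨h.1, hy, hxS⟩)
  exact hS.1.2.2 key

lemma dir {G : SimpleGraph V} {s t : V} {S T : Set V}
    (hS : IsMinSep G s t S) (hT : IsMinSep G s t T)
    (h : compS G S s ⊆ compS G T s) : compS G T t ⊆ compS G S t := by
  intro x hx
  have key : x ∈ compS G S t ∧ x ∈ compS G T t := by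
    refine walk_ind (fun z => z ∈ compS G S t ∧ z ∈ compS G T t)
      ⟨SimpleGraph.Reachable.refl t, SimpleGraph.Reachable.refl t⟩
      (fun y x ih he => ?_) hx
    have hy : y ∉ S := mem_comp_not_sep hS.1.2.1 ih.1
    have hxCT : x ∈ compS G T t := ih.2.trans (SimpleGraph.Adj.reachable he)
    have hxS : x ∉ S := by
      intro hxS
      obtain ⟨u, huC, hua⟩ := min_nbr hS hxS
      have huT : u ∈ compS G T s := h huC
      have huTn : u ∉ T := mem_comp_not_sep hT.1.1 huT
      exact hT.1.2.2 (huT.trans ((SimpleGraph.Adj.reachable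
        (⟨hua, huTn, he.2.2⟩ : (gdel G T).Adj u x)).trans hxCT.symm))
    exact ⟨ih.1.trans (SimpleGraph.Adj.reachable ⟨he.1, hy, hxS⟩), hxCT⟩
  exact key.1

/-- For minimal `s,t`-separators `S, T`:
`C_s(G−S) ⊆ C_s(G−T)` iff `C_t(G−T) ⊆ C_t(G−S)`. -/
theorem stmt_3 [Fintype V] (G : SimpleGraph V) (s t : V) (hst : s ≠ t)
    (hadj : ¬ G.Adj s t) (S T : Set V)
    (hS : IsMinSep G s t S) (hT : IsMinSep G s t T) :
    compS G S s ⊆ compS G T s ↔ compS G T t ⊆ compS G S t := by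
  constructor
  · exact dir hS hT
  · exact dir (isMinSep_symm hT) (isMinSep_symm hS)
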